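/- Let ρ^{XAB} = Σ_x p(x)|x⟩⟨x| ⊗ ρ_x^{AB} be a cq state and let σ^{XAB} = Σ_x q(x)|x⟩⟨x| ⊗ σ_x^A ⊗ σ_x^B, where q is a probability mass function on the same alphabet and σ_x^A, σ_x^B are states, with supp(ρ^{XAB}) ⊆ supp(σ^{XAB}). Then for every ε ∈ (0,1) there exists a state ρ'^{XAB} ∈ B^ε(ρ^{XAB}) of the form Σ_x p'(x)|x⟩⟨x| ⊗ ρ'^{AB}_x (classical on X), with ρ'^A_x = Tr_B ρ'^{AB}_x, such that D_max( ρ'^{XAB} ‖ Σ_x p'(x)|x⟩⟨x| ⊗ ρ'^A_x ⊗ σ_x^B ) ≤ D_max( ρ^{XAB} ‖ σ^{XAB} ) + log₂( 1/(1−√(1−ε²)) + 1 ). -/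

import Mathlib

/-!
Mix the reference into the state: with `t = 1 - √(1 - ε²)` let `ρ' = (1 - t) ρ + t σ`, again a
cq state. Since `ρ' ≥ (1 - t) ρ`, operator monotonicity of the square root gives
`F(ρ', ρ) ≥ √(1 - t)`, hence `P(ρ', ρ) ≤ √t ≤ ε`. The `A`-marginals of `ρ'` are the same mixture
of those of `ρ` and of `σ^A`, so the reference `τ = Σ_x p'(x)|x⟩⟨x| ⊗ ρ'^A_x ⊗ σ^B_x` dominates
`t σ`; then `ρ ≤ c σ` (such `c` exist by the support inclusion, and `c ≥ 1` by comparing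
traces) gives
`ρ' ≤ ((1 - t) c + t) σ ≤ c (1/t + 1) τ`.
-/

open scoped Matrix Kronecker BigOperators
open Matrix
open scoped ComplexOrder Classical

namespace Paper

/-- Total positive semidefinite square root (junk value `0` off the PSD cone). -/
noncomputable def psqrt {n : Type*} [Fintype n] [DecidableEq n] (A : Matrix n n ℂ) :
    Matrix n n ℂ :=
  if h : A.PosSemidef then
    (h.1.eigenvectorUnitary : Matrix n n ℂ) *
      Matrix.diagonal ((↑) ∘ (fun x : ℝ => Real.sqrt x) ∘ h.1.eigenvalues) *
      (star (h.1.eigenvectorUnitary : Matrix n n ℂ))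
  else 0

/-- Trace norm `‖A‖₁ = Tr √(AᴴA)`. -/
noncomputable def traceNorm {n : Type*} [Fintype n] [DecidableEq n] (A : Matrix n n ℂ) : ℝ :=
  (psqrt (Aᴴ * A)).trace.re

/-- Fidelity `F(ρ,σ) = ‖√ρ√σ‖₁` of positive semidefinite matrices. -/
noncomputable def fidelity {n : Type*} [Fintype n] [DecidableEq n] (ρ σ : Matrix n n ℂ) : ℝ :=
  traceNorm (psqrt ρ * psqrt σ)

/-- Purified distance `P(ρ,σ) = √(1 - F(ρ,σ)²)`. -/
noncomputable def purDist {n : Type*} [Fintype n] [DecidableEq n] (ρ σ : Matrix n n ℂ) : ℝ :=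
  Real.sqrt (1 - fidelity ρ σ ^ 2)

/-- A state (density matrix): positive semidefinite with unit trace. -/
def IsState {n : Type*} [Fintype n] (ρ : Matrix n n ℂ) : Prop :=
  ρ.PosSemidef ∧ ρ.trace = 1

/-- A probability mass function on a finite alphabet. -/
def IsPMF {X : Type*} [Fintype X] (p : X → ℝ) : Prop :=
  (∀ x, 0 ≤ p x) ∧ ∑ x, p x = 1

/-- Support inclusion `supp ρ ⊆ supp σ`, phrased via kernels (equivalent for PSD matrices). -/
def SuppSubset {n : Type*} [Fintype n] (ρ σ : Matrix n n ℂ) : Prop :=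
  ∀ v : n → ℂ, σ.mulVec v = 0 → ρ.mulVec v = 0

/-- Loewner order `A ≤ B`. -/
def LLE {n : Type*} [Fintype n] (A B : Matrix n n ℂ) : Prop := (B - A).PosSemidef

/-- Binary logarithm of a Hermitian matrix, taken on its support via functional calculus
(`Real.logb 2 0 = 0` takes care of the kernel). -/
noncomputable def matLog {n : Type*} [Fintype n] [DecidableEq n] (A : Matrix n n ℂ) :
    Matrix n n ℂ :=
  if hA : A.IsHermitian then
    (hA.eigenvectorUnitary : Matrix n n ℂ) *
      Matrix.diagonal (fun i => (Real.logb 2 (hA.eigenvalues i) : ℂ)) *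
      (star (hA.eigenvectorUnitary : Matrix n n ℂ))
  else 0

/-- Quantum relative entropy (base 2): `D(ρ‖σ) = Tr(ρ log₂ ρ) - Tr(ρ log₂ σ)`. -/
noncomputable def relEnt {n : Type*} [Fintype n] [DecidableEq n] (ρ σ : Matrix n n ℂ) : ℝ :=
  ((ρ * matLog ρ).trace - (ρ * matLog σ).trace).re

/-- Max-relative entropy `D_max(ρ‖σ) = inf {λ | ρ ≤ 2^λ σ}`. -/
noncomputable def dMax {n : Type*} [Fintype n] (ρ σ : Matrix n n ℂ) : ℝ :=
  sInf {l : ℝ | LLE ρ ((2 : ℝ) ^ l • σ)}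

/-- Smooth max-relative entropy `D_max^ε(ρ‖σ) = min_{ρ' ∈ B^ε(ρ)} D_max(ρ'‖σ)`. -/
noncomputable def dMaxSmooth {n : Type*} [Fintype n] [DecidableEq n]
    (ε : ℝ) (ρ σ : Matrix n n ℂ) : ℝ :=
  sInf {d : ℝ | ∃ ρ' : Matrix n n ℂ, IsState ρ' ∧ purDist ρ' ρ ≤ ε ∧ d = dMax ρ' σ}

/-- Partial trace over the second (B) factor. -/
noncomputable def ptraceB {a b : Type*} [Fintype b]
    (M : Matrix (a × b) (a × b) ℂ) : Matrix a a ℂ :=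
  Matrix.of fun i j => ∑ k : b, M (i, k) (j, k)

/-- Partial trace over the first (A) factor. -/
noncomputable def ptraceA {a b : Type*} [Fintype a]
    (M : Matrix (a × b) (a × b) ℂ) : Matrix b b ℂ :=
  Matrix.of fun i j => ∑ k : a, M (k, i) (k, j)

/-- The cq state `Σ_x p(x) |x⟩⟨x| ⊗ ρ_x`. -/
noncomputable def cqState {X d : Type*} [Fintype X] [DecidableEq X] [Fintype d] [DecidableEq d]
    (p : X → ℝ) (ρ : X → Matrix d d ℂ) : Matrix (X × d) (X × d) ℂ :=
  ∑ x, p x • (Matrix.single x x (1 : ℂ) ⊗ₖ ρ x)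

/-- The Markov state `ρ^{A-X-B} = Σ_x p(x)|x⟩⟨x| ⊗ ρ_x^A ⊗ ρ_x^B` of a cq state. -/
noncomputable def markovState {X a b : Type*} [Fintype X] [DecidableEq X]
    [Fintype a] [DecidableEq a] [Fintype b] [DecidableEq b]
    (p : X → ℝ) (ρ : X → Matrix (a × b) (a × b) ℂ) :
    Matrix (X × (a × b)) (X × (a × b)) ℂ :=
  cqState p fun x => ptraceB (ρ x) ⊗ₖ ptraceA (ρ x)

/-- Conditional mutual information `I(A;B|X)_ρ = D(ρ^{XAB} ‖ ρ^{A-X-B})` of a cq state. -/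
noncomputable def condMI {X a b : Type*} [Fintype X] [DecidableEq X]
    [Fintype a] [DecidableEq a] [Fintype b] [DecidableEq b]
    (p : X → ℝ) (ρ : X → Matrix (a × b) (a × b) ℂ) : ℝ :=
  relEnt (cqState p ρ) (markovState p ρ)

/-- `D_max^ε(A;B|X)_ρ = D_max^ε(ρ^{XAB} ‖ ρ^{A-X-B})` of a cq state. -/
noncomputable def condDmaxSmooth {X a b : Type*} [Fintype X] [DecidableEq X]
    [Fintype a] [DecidableEq a] [Fintype b] [DecidableEq b]
    (ε : ℝ) (p : X → ℝ) (ρ : X → Matrix (a × b) (a × b) ℂ) : ℝ :=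
  dMaxSmooth ε (cqState p ρ) (markovState p ρ)

/-- `Ĩ_max^ε(A;B|X)_ρ`: minimum of `D_max(ρ' ‖ Σ_x p'(x)|x⟩⟨x| ⊗ ρ'^A_x ⊗ ρ^B_x)` over
cq states `ρ'` in the ε-ball around `ρ^{XAB}`. -/
noncomputable def condImaxTilde {X a b : Type*} [Fintype X] [DecidableEq X]
    [Fintype a] [DecidableEq a] [Fintype b] [DecidableEq b]
    (ε : ℝ) (p : X → ℝ) (ρ : X → Matrix (a × b) (a × b) ℂ) : ℝ :=
  sInf {d : ℝ | ∃ (p' : X → ℝ) (ρ' : X → Matrix (a × b) (a × b) ℂ),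
    IsPMF p' ∧ (∀ x, IsState (ρ' x)) ∧
    purDist (cqState p' ρ') (cqState p ρ) ≤ ε ∧
    d = dMax (cqState p' ρ') (cqState p' fun x => ptraceB (ρ' x) ⊗ₖ ptraceA (ρ x))}

/-- `Ĩ_max^ε(A;B)_ρ = inf_{ρ' ∈ B^ε(ρ)} D_max(ρ' ‖ ρ'^A ⊗ ρ^B)` for a bipartite state. -/
noncomputable def bipImaxTilde {a b : Type*} [Fintype a] [DecidableEq a]
    [Fintype b] [DecidableEq b] (ε : ℝ) (ρ : Matrix (a × b) (a × b) ℂ) : ℝ :=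
  sInf {d : ℝ | ∃ ρ' : Matrix (a × b) (a × b) ℂ, IsState ρ' ∧ purDist ρ' ρ ≤ ε ∧
    d = dMax ρ' (ptraceB ρ' ⊗ₖ ptraceA ρ)}

/-- The binary entropy function. -/
noncomputable def binEnt (ε : ℝ) : ℝ :=
  -(ε * Real.logb 2 ε) - (1 - ε) * Real.logb 2 (1 - ε)

/-- Hypothesis testing relative entropy `D_H^ε(ρ‖σ)`. -/
noncomputable def dH {n : Type*} [Fintype n] [DecidableEq n] (ε : ℝ) (ρ σ : Matrix n n ℂ) : ℝ :=
  sSup {d : ℝ | ∃ Λ : Matrix n n ℂ, Λ.PosSemidef ∧ (1 - Λ).PosSemidef ∧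
    1 - ε ≤ ((Λ * ρ).trace).re ∧ d = -Real.logb 2 (((Λ * σ).trace).re)}

/-- The convex-split state
`τ^{XAB₁…Bₙ} = Σ_x p(x)|x⟩⟨x| ⊗ (1/n) Σ_j ρ_x^{AB_j} ⊗ (⊗_{i≠j} σ_x^{B_i})`,
written entrywise on the index type `X × (A × Bⁿ)`. -/
noncomputable def tauState {X a b : Type*} [Fintype X] [DecidableEq X]
    [Fintype a] [Fintype b]
    (p : X → ℝ) (ρ : X → Matrix (a × b) (a × b) ℂ) (σ : X → Matrix b b ℂ) (nn : ℕ) :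
    Matrix (X × (a × (Fin nn → b))) (X × (a × (Fin nn → b))) ℂ :=
  Matrix.of fun q q' =>
    (if q.1 = q'.1 then (p q.1 : ℂ) else 0) *
      ((nn : ℂ)⁻¹ * ∑ j : Fin nn,
        ρ q.1 (q.2.1, q.2.2 j) (q'.2.1, q'.2.2 j) *
          ∏ i ∈ Finset.univ.erase j, σ q.1 (q.2.2 i) (q'.2.2 i))

/-- The product reference state
`Σ_x p(x)|x⟩⟨x| ⊗ ρ_x^A ⊗ σ_x^{B₁} ⊗ … ⊗ σ_x^{Bₙ}`, entrywise. -/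
noncomputable def refState {X a b : Type*} [Fintype X] [DecidableEq X]
    [Fintype a] [Fintype b]
    (p : X → ℝ) (ρ : X → Matrix (a × b) (a × b) ℂ) (σ : X → Matrix b b ℂ) (nn : ℕ) :
    Matrix (X × (a × (Fin nn → b))) (X × (a × (Fin nn → b))) ℂ :=
  Matrix.of fun q q' =>
    (if q.1 = q'.1 then (p q.1 : ℂ) else 0) *
      (ptraceB (ρ q.1) q.2.1 q'.2.1 * ∏ i : Fin nn, σ q.1 (q.2.2 i) (q'.2.2 i))

-- Under `MatrixOrder`, `A ≤ B` unfolds to `(B - A).PosSemidef`, which is `LLE A B`.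
open scoped MatrixOrder Matrix.Norms.L2Operator

section Loewner

variable {n : Type*} [Fintype n]

lemma trace_re_mono {A B : Matrix n n ℂ} (h : A ≤ B) : A.trace.re ≤ B.trace.re := by
  have h' := (Matrix.le_iff.mp h).trace_nonneg
  rw [trace_sub, sub_nonneg] at h'
  exact (Complex.le_def.mp h').1

lemma one_le_of_le_smul {ρ σ : Matrix n n ℂ} (hρ : ρ.trace = 1) (hσ : σ.trace = 1) {c : ℝ}
    (h : ρ ≤ c • σ) : 1 ≤ c := by
  simpa [hρ, hσ] using trace_re_mono h

lemma bddBelow_lle_rpow_smul {ρ σ : Matrix n n ℂ} (hρ : ρ.trace = 1) (hσ : σ.trace = 1) :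
    BddBelow {l : ℝ | LLE ρ ((2 : ℝ) ^ l • σ)} := by
  refine ⟨0, fun l hl => ?_⟩
  have h := one_le_of_le_smul hρ hσ hl
  rwa [← Real.rpow_zero 2, Real.rpow_le_rpow_left_iff one_lt_two] at h

lemma dMax_le_dMax_add_logb {ρ σ ρ' σ' : Matrix n n ℂ} {K : ℝ} (hK : 0 < K)
    (hρσ : ∃ c : ℝ, 0 < c ∧ ρ ≤ c • σ) (hbdd : BddBelow {l : ℝ | LLE ρ' ((2 : ℝ) ^ l • σ')})
    (h : ∀ c : ℝ, 0 < c → ρ ≤ c • σ → ρ' ≤ (c * K) • σ') :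
    dMax ρ' σ' ≤ dMax ρ σ + Real.logb 2 K := by
  obtain ⟨c, hc, hle⟩ := hρσ
  have hne : {l : ℝ | LLE ρ ((2 : ℝ) ^ l • σ)}.Nonempty :=
    ⟨Real.logb 2 c, by rwa [Set.mem_ofPred_eq, Real.rpow_logb two_pos (by norm_num) hc]⟩
  rw [dMax, dMax, ← sub_le_iff_le_add]
  refine le_csInf hne fun l hl => sub_le_iff_le_add.mpr (csInf_le hbdd ?_)
  rw [Set.mem_ofPred_eq, Real.rpow_add two_pos, Real.rpow_logb two_pos (by norm_num) hK]
  exact h _ (by positivity) hl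

end Loewner

section Fidelity

variable {n : Type*} [Fintype n] [DecidableEq n]

lemma psqrt_eq_cfcSqrt {A : Matrix n n ℂ} (hA : A.PosSemidef) : psqrt A = CFC.sqrt A := by
  rw [psqrt, dif_pos hA, CFC.sqrt_eq_real_sqrt A hA.nonneg, cfcₙ_eq_cfc, hA.1.cfc_eq]
  rfl

lemma fidelity_eq_trace_sqrt {ρ σ : Matrix n n ℂ} (hρ : ρ.PosSemidef) (hσ : σ.PosSemidef) :
    fidelity ρ σ = (CFC.sqrt (CFC.sqrt σ * ρ * CFC.sqrt σ)).trace.re := by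
  have hsq : (CFC.sqrt ρ * CFC.sqrt σ)ᴴ * (CFC.sqrt ρ * CFC.sqrt σ)
      = CFC.sqrt σ * ρ * CFC.sqrt σ := by
    rw [conjTranspose_mul, (CFC.sqrt_nonneg ρ).posSemidef.1, (CFC.sqrt_nonneg σ).posSemidef.1,
      Matrix.mul_assoc, ← Matrix.mul_assoc (CFC.sqrt ρ), CFC.sqrt_mul_sqrt_self ρ hρ.nonneg,
      ← Matrix.mul_assoc]
  have hpsd : (CFC.sqrt σ * ρ * CFC.sqrt σ).PosSemidef := by
    have h := hρ.conjTranspose_mul_mul_same (CFC.sqrt σ)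
    rwa [(CFC.sqrt_nonneg σ).posSemidef.1.eq] at h
  rw [fidelity, traceNorm, psqrt_eq_cfcSqrt hρ, psqrt_eq_cfcSqrt hσ, hsq, psqrt_eq_cfcSqrt hpsd]

lemma sqrt_mul_trace_le_fidelity {ρ σ : Matrix n n ℂ} (hρ : ρ.PosSemidef) (hσ : σ.PosSemidef)
    {c : ℝ} (hc : 0 ≤ c) (h : c • σ ≤ ρ) : √c * σ.trace.re ≤ fidelity ρ σ := by
  have hsqrtσ : star (CFC.sqrt σ) = CFC.sqrt σ := (CFC.sqrt_nonneg σ).posSemidef.1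
  have hsq : (√c • σ) ^ 2 = star (CFC.sqrt σ) * (c • σ) * CFC.sqrt σ := by
    set r := CFC.sqrt σ
    have hr : r * r = σ := CFC.sqrt_mul_sqrt_self σ hσ.nonneg
    rw [hsqrtσ, smul_pow, Real.sq_sqrt hc, Matrix.mul_smul, Matrix.smul_mul, ← hr]
    simp only [sq, Matrix.mul_assoc]
  have hle : √c • σ ≤ CFC.sqrt (CFC.sqrt σ * ρ * CFC.sqrt σ) := by
    have h2 := CFC.sqrt_le_sqrt _ _ (star_left_conjugate_le_conjugate h (CFC.sqrt σ))
    rwa [← hsq, hsqrtσ, CFC.sqrt_sq (√c • σ) (smul_nonneg (Real.sqrt_nonneg c) hσ.nonneg)] at h2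
  simpa [fidelity_eq_trace_sqrt hρ hσ, trace_smul] using trace_re_mono hle

end Fidelity

section Support

variable {n : Type*} [Fintype n] [DecidableEq n]

lemma diagonal_indicator_le_smul_diagonal {d : n → ℝ} (hd : 0 ≤ d) :
    diagonal (fun i => ((if d i = 0 then 0 else 1 : ℝ) : ℂ))
      ≤ (∑ i, (d i)⁻¹) • diagonal (fun i => (d i : ℂ)) := by
  rw [Matrix.le_iff, ← diagonal_smul, diagonal_sub]
  refine PosSemidef.diagonal fun i => ?_
  by_cases hi : d i = 0
  · simp [hi]
  -- the junk value `0⁻¹ = 0` makes the sum see only the support of `d`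
  have hle : (d i)⁻¹ ≤ ∑ j, (d j)⁻¹ :=
    Finset.single_le_sum (fun j _ => inv_nonneg.mpr (hd j)) (Finset.mem_univ i)
  have h1 : 1 ≤ (∑ j, (d j)⁻¹) * d i := by
    rw [← inv_mul_cancel₀ hi]
    exact mul_le_mul_of_nonneg_right hle (hd i)
  simp only [Pi.zero_apply, Pi.smul_apply, hi, if_false, Complex.ofReal_one, Complex.real_smul,
    sub_nonneg]
  exact_mod_cast h1

lemma exists_le_smul_diagonal_of_col_eq_zero {A : Matrix n n ℂ} (hA : A.IsHermitian)
    {d : n → ℝ} (hd : 0 ≤ d) (hcol : ∀ i, d i = 0 → A.col i = 0) :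
    ∃ c : ℝ, 0 ≤ c ∧ A ≤ c • diagonal (fun i => (d i : ℂ)) := by
  set Q : Matrix n n ℂ := diagonal fun i => ((if d i = 0 then 0 else 1 : ℝ) : ℂ)
  have hQ : star Q = Q := by
    simp [Q, star_eq_conjTranspose, diagonal_conjTranspose]
  have hAQ : A * Q = A := by
    ext j i
    by_cases hi : d i = 0
    · simpa [Q, hi] using (congrFun (hcol i hi) j).symm
    · simp [Q, hi]
  have hQA : Q * A = A := by
    have hAs : star A = A := hA
    simpa [star_mul, hQ, hAs] using congrArg star hAQ
  have hQQ : Q * Q = Q := by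
    simp only [Q, diagonal_mul_diagonal, ← Complex.ofReal_mul]
    congr! 3 with i
    by_cases hi : d i = 0 <;> simp [hi]
  have hAle : A ≤ ‖A‖ • Q := calc
    A = star Q * A * Q := by rw [hQ, hQA, hAQ]
    _ ≤ star Q * algebraMap ℝ _ ‖A‖ * Q :=
      star_left_conjugate_le_conjugate (IsSelfAdjoint.le_algebraMap_norm_self hA) Q
    _ = ‖A‖ • Q := by
      rw [hQ, Algebra.algebraMap_eq_smul_one, Matrix.mul_smul, Matrix.mul_one, Matrix.smul_mul,
        hQQ]
  refine ⟨‖A‖ * ∑ i, (d i)⁻¹,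
    mul_nonneg (norm_nonneg A) (Finset.sum_nonneg fun j _ => inv_nonneg.mpr (hd j)),
    hAle.trans ?_⟩
  rw [mul_smul]
  exact smul_le_smul_of_nonneg_left (diagonal_indicator_le_smul_diagonal hd) (norm_nonneg A)

lemma exists_le_smul_of_suppSubset {ρ σ : Matrix n n ℂ} (hρ : ρ.IsHermitian) (hσ : σ.PosSemidef)
    (h : SuppSubset ρ σ) : ∃ c : ℝ, 0 < c ∧ ρ ≤ c • σ := by
  set U : Matrix n n ℂ := (hσ.1.eigenvectorUnitary : Matrix n n ℂ)
  have hUU : U * star U = 1 := Unitary.coe_mul_star_self _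
  have hσU : star U * σ * U = diagonal (fun i => (hσ.1.eigenvalues i : ℂ)) := by
    have h := hσ.1.conjStarAlgAut_star_eigenvectorUnitary
    rwa [Unitary.conjStarAlgAut_star_apply] at h
  have hcol : ∀ i, hσ.1.eigenvalues i = 0 → (star U * ρ * U).col i = 0 := by
    intro i hi
    have hker : σ *ᵥ ⇑(hσ.1.eigenvectorBasis i) = 0 := by
      rw [hσ.1.mulVec_eigenvectorBasis, hi, zero_smul]
    rw [← mulVec_single_one, ← mulVec_mulVec, IsHermitian.eigenvectorUnitary_mulVec,
      ← mulVec_mulVec, h _ hker, mulVec_zero]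
  have hA : (star U * ρ * U).IsHermitian := by
    simpa [star_eq_conjTranspose] using isHermitian_conjTranspose_mul_mul U hρ
  obtain ⟨c, hc, hle⟩ := exists_le_smul_diagonal_of_col_eq_zero hA hσ.eigenvalues_nonneg hcol
  refine ⟨c + 1, by positivity, ?_⟩
  calc ρ = star (star U) * (star U * ρ * U) * star U := by
        simp only [star_star, ← Matrix.mul_assoc, hUU, Matrix.one_mul]
        rw [Matrix.mul_assoc, hUU, Matrix.mul_one]
    _ ≤ star (star U) * (c • diagonal fun i => (hσ.1.eigenvalues i : ℂ)) * star U :=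
      star_left_conjugate_le_conjugate hle _
    _ = c • σ := by
        rw [← hσU, star_star, Matrix.mul_smul, Matrix.smul_mul]
        simp only [← Matrix.mul_assoc, hUU, Matrix.one_mul]
        rw [Matrix.mul_assoc, hUU, Matrix.mul_one]
    _ ≤ (c + 1) • σ := smul_le_smul_of_nonneg_right (by linarith) hσ.nonneg

end Support

section PartialTrace

variable {a b : Type*} [Fintype b]

lemma ptraceB_eq_sum_submatrix (M : Matrix (a × b) (a × b) ℂ) :
    ptraceB M = ∑ k : b, M.submatrix (fun i => (i, k)) (fun i => (i, k)) := by
  ext i j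
  simp [ptraceB, Matrix.sum_apply]

lemma posSemidef_ptraceB {M : Matrix (a × b) (a × b) ℂ} (hM : M.PosSemidef) :
    (ptraceB M).PosSemidef := by
  rw [ptraceB_eq_sum_submatrix]
  exact posSemidef_sum _ fun k _ => hM.submatrix _

lemma trace_ptraceB [Fintype a] (M : Matrix (a × b) (a × b) ℂ) : (ptraceB M).trace = M.trace := by
  simp [ptraceB, trace, Fintype.sum_prod_type]

lemma IsState.ptraceB [Fintype a] {M : Matrix (a × b) (a × b) ℂ} (hM : IsState M) :
    IsState (ptraceB M) :=
  ⟨posSemidef_ptraceB hM.1, (trace_ptraceB M).trans hM.2⟩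

lemma ptraceB_add (M N : Matrix (a × b) (a × b) ℂ) :
    ptraceB (M + N) = ptraceB M + ptraceB N := by
  ext i j
  simp [ptraceB, Finset.sum_add_distrib]

lemma ptraceB_smul (c : ℝ) (M : Matrix (a × b) (a × b) ℂ) : ptraceB (c • M) = c • ptraceB M := by
  ext i j
  simp [ptraceB, Finset.smul_sum]

lemma ptraceB_kronecker (A : Matrix a a ℂ) (B : Matrix b b ℂ) :
    ptraceB (A ⊗ₖ B) = B.trace • A := by
  ext i j
  simp [ptraceB, trace, ← Finset.mul_sum, mul_comm]

end PartialTrace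

section States

variable {n m : Type*} [Fintype n] [Fintype m]

lemma IsState.kronecker [DecidableEq n] [DecidableEq m] {A : Matrix n n ℂ} {B : Matrix m m ℂ}
    (hA : IsState A) (hB : IsState B) : IsState (A ⊗ₖ B) :=
  ⟨hA.1.kronecker hB.1, by rw [trace_kronecker, hA.2, hB.2, one_mul]⟩

lemma IsState.smul_add_smul {ρ σ : Matrix n n ℂ} (hρ : IsState ρ) (hσ : IsState σ) {s t : ℝ}
    (hs : 0 ≤ s) (ht : 0 ≤ t) (hst : s + t = 1) : IsState (s • ρ + t • σ) :=
  ⟨(hρ.1.smul hs).add (hσ.1.smul ht), by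
    rw [trace_add, trace_smul, trace_smul, hρ.2, hσ.2, ← add_smul, hst, one_smul]⟩

lemma exists_isState_smul_eq {ρ σ : Matrix n n ℂ} (hρ : IsState ρ) (hσ : IsState σ) {s t : ℝ}
    (hs : 0 ≤ s) (ht : 0 ≤ t) : ∃ τ, IsState τ ∧ (s + t) • τ = s • ρ + t • σ := by
  by_cases hst : s + t = 0
  · obtain ⟨rfl, rfl⟩ : s = 0 ∧ t = 0 := ⟨by linarith, by linarith⟩
    exact ⟨σ, hσ, by simp⟩
  refine ⟨(s / (s + t)) • ρ + (t / (s + t)) • σ,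
    hρ.smul_add_smul hσ (by positivity) (by positivity) (by rw [← add_div, div_self hst]), ?_⟩
  rw [smul_add, smul_smul, smul_smul, mul_div_cancel₀ _ hst, mul_div_cancel₀ _ hst]

lemma exists_cq_mixture {X : Type*} [Fintype X] {p q : X → ℝ} (hp : IsPMF p) (hq : IsPMF q)
    {ρ σ : X → Matrix n n ℂ} (hρ : ∀ x, IsState (ρ x)) (hσ : ∀ x, IsState (σ x))
    {t : ℝ} (ht0 : 0 ≤ t) (ht1 : t ≤ 1) :
    ∃ (p' : X → ℝ) (ρ' : X → Matrix n n ℂ), IsPMF p' ∧ (∀ x, IsState (ρ' x)) ∧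
      ∀ x, p' x • ρ' x = ((1 - t) * p x) • ρ x + (t * q x) • σ x := by
  have hw : ∀ x, 0 ≤ (1 - t) * p x ∧ 0 ≤ t * q x := fun x =>
    ⟨mul_nonneg (sub_nonneg.mpr ht1) (hp.1 x), mul_nonneg ht0 (hq.1 x)⟩
  choose ρ' hρ' hmix using fun x => exists_isState_smul_eq (hρ x) (hσ x) (hw x).1 (hw x).2
  refine ⟨fun x => (1 - t) * p x + t * q x, ρ', ⟨fun x => add_nonneg (hw x).1 (hw x).2, ?_⟩,
    hρ', hmix⟩
  simp [Finset.sum_add_distrib, ← Finset.mul_sum, hp.2, hq.2]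

end States

section CQ

variable {X d : Type*} [Fintype X] [DecidableEq X] [Fintype d] [DecidableEq d]

lemma posSemidef_cqState {p : X → ℝ} {ρ : X → Matrix d d ℂ} (hp : ∀ x, 0 ≤ p x)
    (hρ : ∀ x, (ρ x).PosSemidef) : (cqState p ρ).PosSemidef := by
  refine posSemidef_sum _ fun x _ => (PosSemidef.kronecker ?_ (hρ x)).smul (hp x)
  rw [← diagonal_single]
  exact PosSemidef.diagonal fun y => by by_cases hy : y = x <;> simp [hy]

lemma IsState.cqState {p : X → ℝ} {ρ : X → Matrix d d ℂ} (hp : IsPMF p)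
    (hρ : ∀ x, IsState (ρ x)) : IsState (cqState p ρ) := by
  refine ⟨posSemidef_cqState hp.1 fun x => (hρ x).1, ?_⟩
  simp [Paper.cqState, trace_sum, trace_smul, trace_kronecker, (hρ _).2, ← Complex.ofReal_sum,
    hp.2]

lemma cqState_eq_add {p p₁ p₂ : X → ℝ} {ρ ρ₁ ρ₂ : X → Matrix d d ℂ}
    (h : ∀ x, p x • ρ x = p₁ x • ρ₁ x + p₂ x • ρ₂ x) :
    cqState p ρ = cqState p₁ ρ₁ + cqState p₂ ρ₂ := by
  simp only [Paper.cqState, ← Finset.sum_add_distrib, ← kronecker_smul, h, kronecker_add]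

lemma cqState_const_mul (c : ℝ) (p : X → ℝ) (ρ : X → Matrix d d ℂ) :
    cqState (fun x => c * p x) ρ = c • cqState p ρ := by
  simp only [Paper.cqState, Finset.smul_sum, smul_smul]

end CQ

lemma smul_add_smul_le_smul {M : Type*} [AddCommGroup M] [PartialOrder M] [IsOrderedAddMonoid M]
    [Module ℝ M] [PosSMulMono ℝ M] {ρ σ τ : M} {t c : ℝ} (ht0 : 0 < t) (ht1 : t ≤ 1)
    (hc : 1 ≤ c) (hρ : ρ ≤ c • σ) (hτ : 0 ≤ τ) (hστ : t • σ ≤ τ) :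
    (1 - t) • ρ + t • σ ≤ (c * (1 / t + 1)) • τ := calc
  (1 - t) • ρ + t • σ ≤ (1 - t) • c • σ + t • σ :=
    add_le_add_left (smul_le_smul_of_nonneg_left hρ (sub_nonneg.mpr ht1)) _
  _ = ((1 - t) * c / t + 1) • t • σ := by
    rw [smul_smul, smul_smul, add_mul, div_mul_cancel₀ _ ht0.ne', one_mul, add_smul]
  _ ≤ ((1 - t) * c / t + 1) • τ := smul_le_smul_of_nonneg_left hστ (by positivity)
  _ ≤ (c * (1 / t + 1)) • τ := by
    refine smul_le_smul_of_nonneg_right ?_ hτ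
    rw [sub_mul, sub_div, one_mul, mul_div_cancel_left₀ _ ht0.ne', mul_add, mul_one_div]
    linarith

section Mixture

variable {n : Type*} [Fintype n] [DecidableEq n]

lemma purDist_mixture_le {ρ σ : Matrix n n ℂ} (hρ : IsState ρ) (hσ : σ.PosSemidef) {t : ℝ}
    (ht0 : 0 ≤ t) (ht1 : t ≤ 1) : purDist ((1 - t) • ρ + t • σ) ρ ≤ √t := by
  have hF : √(1 - t) ≤ fidelity ((1 - t) • ρ + t • σ) ρ := by
    simpa [hρ.2] using sqrt_mul_trace_le_fidelity
      ((hρ.1.smul (sub_nonneg.mpr ht1)).add (hσ.smul ht0)) hρ.1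
      (sub_nonneg.mpr ht1) (le_add_of_nonneg_right (smul_nonneg ht0 hσ.nonneg))
  refine Real.sqrt_le_sqrt ?_
  nlinarith [Real.sq_sqrt (sub_nonneg.mpr ht1), Real.sqrt_nonneg (1 - t)]

lemma dMax_mixture_le {ρ σ τ : Matrix n n ℂ} (hρ : IsState ρ) (hσ : IsState σ)
    (hτ : IsState τ) (hsupp : SuppSubset ρ σ) {t : ℝ} (ht0 : 0 < t) (ht1 : t ≤ 1)
    (hστ : t • σ ≤ τ) :
    dMax ((1 - t) • ρ + t • σ) τ ≤ dMax ρ σ + Real.logb 2 (1 / t + 1) := by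
  have hmix := hρ.smul_add_smul hσ (sub_nonneg.mpr ht1) ht0.le (sub_add_cancel 1 t)
  refine dMax_le_dMax_add_logb (by positivity) (exists_le_smul_of_suppSubset hρ.1.1 hσ.1 hsupp)
    (bddBelow_lle_rpow_smul hmix.2 hτ.2) fun c _ hc => ?_
  exact smul_add_smul_le_smul ht0 ht1 (one_le_of_le_smul hρ.2 hσ.2 hc) hc hτ.1.nonneg hστ

end Mixture

lemma sqrt_one_sub_sqrt_one_sub_sq_le {ε : ℝ} (hε0 : 0 ≤ ε) (hε1 : ε ≤ 1) :
    √(1 - √(1 - ε ^ 2)) ≤ ε := by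
  have h : 1 - ε ^ 2 ≤ √(1 - ε ^ 2) := Real.le_sqrt_of_sq_le
    (by nlinarith [mul_nonneg (sq_nonneg ε) (show 0 ≤ 1 - ε ^ 2 by nlinarith)])
  rw [Real.sqrt_le_left hε0]
  linarith

/-- existence of a nearby cq state with controlled max-relative entropy
against a reference with its own `A`-marginals. -/
theorem exists_cq_smoothing {X a b : Type*} [Fintype X] [DecidableEq X]
    [Fintype a] [DecidableEq a] [Fintype b] [DecidableEq b]
    (p q : X → ℝ) (hp : IsPMF p) (hq : IsPMF q)
    (ρ : X → Matrix (a × b) (a × b) ℂ) (hρ : ∀ x, IsState (ρ x))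
    (σA : X → Matrix a a ℂ) (σB : X → Matrix b b ℂ)
    (hσA : ∀ x, IsState (σA x)) (hσB : ∀ x, IsState (σB x))
    (hsupp : SuppSubset (cqState p ρ) (cqState q fun x => σA x ⊗ₖ σB x))
    (ε : ℝ) (hε : ε ∈ Set.Ioo (0 : ℝ) 1) :
    ∃ (p' : X → ℝ) (ρ' : X → Matrix (a × b) (a × b) ℂ),
      IsPMF p' ∧ (∀ x, IsState (ρ' x)) ∧
      purDist (cqState p' ρ') (cqState p ρ) ≤ ε ∧
      dMax (cqState p' ρ') (cqState p' fun x => ptraceB (ρ' x) ⊗ₖ σB x) ≤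
        dMax (cqState p ρ) (cqState q fun x => σA x ⊗ₖ σB x) +
          Real.logb 2 (1 / (1 - Real.sqrt (1 - ε ^ 2)) + 1) := by
  obtain ⟨hε0, hε1⟩ := hε
  set t := 1 - √(1 - ε ^ 2)
  have ht0 : 0 < t := sub_pos.mpr ((Real.sqrt_lt' one_pos).mpr (by nlinarith))
  have ht1 : t ≤ 1 := sub_le_self _ (Real.sqrt_nonneg _)
  set σAB : X → Matrix (a × b) (a × b) ℂ := fun x => σA x ⊗ₖ σB x
  have hσAB : ∀ x, IsState (σAB x) := fun x => (hσA x).kronecker (hσB x)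
  obtain ⟨p', ρ', hp', hρ', hmix⟩ := exists_cq_mixture hp hq hρ hσAB ht0.le ht1
  have hμ : cqState p' ρ' = (1 - t) • cqState p ρ + t • cqState q σAB := by
    rw [cqState_eq_add hmix, cqState_const_mul, cqState_const_mul]
  have hτ : cqState p' (fun x => ptraceB (ρ' x) ⊗ₖ σB x)
      = (1 - t) • cqState p (fun x => ptraceB (ρ x) ⊗ₖ σB x) + t • cqState q σAB := by
    rw [← cqState_const_mul, ← cqState_const_mul]
    refine cqState_eq_add fun x => ?_
    rw [← smul_kronecker, ← ptraceB_smul, hmix x, ptraceB_add, ptraceB_smul, ptraceB_smul,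
      ptraceB_kronecker, (hσB x).2, one_smul, add_kronecker, smul_kronecker, smul_kronecker]
  have hρcq := IsState.cqState hp hρ
  have hσcq := IsState.cqState hq hσAB
  refine ⟨p', ρ', hp', hρ', ?_, ?_⟩
  · rw [hμ]
    exact (purDist_mixture_le hρcq hσcq.1 ht0.le ht1).trans
      (sqrt_one_sub_sqrt_one_sub_sq_le hε0.le hε1.le)
  · rw [hμ]
    refine dMax_mixture_le hρcq hσcq
      (IsState.cqState hp' fun x => (hρ' x).ptraceB.kronecker (hσB x)) hsupp ht0 ht1 ?_
    rw [hτ]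
    exact le_add_of_nonneg_left (smul_nonneg (sub_nonneg.mpr ht1)
      (IsState.cqState hp fun x => (hρ x).ptraceB.kronecker (hσB x)).1.nonneg)

end Paper
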